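/- arXiv:2206.09945 — 2 statements merged into one kernel-verified Lean document; each statement's English description precedes it below -/
import Mathlib

section
/- For every K ∈ ℝ^{(n−p)×p}, let D ∈ F^{p×p} be the diagonal matrix whose i-th diagonal entry is W_{ii}. Then λI_p − D is invertible over F; the matrix Φ := (λI_p − D)^{-1}·(W − D) has all diagonal entries equal to 0; I_p − Φ is invertible over F; and with Γ := (λI_p − D)^{-1}·V one has (I_p − Φ)·G = Γ, i.e. G = (I_p − Φ)^{-1}·Γ, so (Φ, Γ) is an NRF pair of G. -/
open Matrix Polynomial

set_option synthInstance.maxHeartbeats 1000000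
set_option maxHeartbeats 1000000

noncomputable section

/-- The field of real rational functions. -/
abbrev FF : Type := RatFunc ℝ

/-- The rational function `λ` (the image of the polynomial indeterminate `X`). -/
noncomputable def lam : FF := RatFunc.X

/-- Entrywise embedding of a real matrix into matrices over `FF`. -/
noncomputable def mapF {k l : Type} (M : Matrix k l ℝ) : Matrix k l FF :=
  M.map (algebraMap ℝ FF)

/-- The pencil `λ I - M` over `FF`, for a real square matrix `M`. -/
noncomputable def lamI {k : Type} [Fintype k] [DecidableEq k] (M : Matrix k k ℝ) :
    Matrix k k FF := lam • (1 : Matrix k k FF) - mapF M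

/-- Entrywise complexification of a real matrix. -/
def mapC {k l : Type} (M : Matrix k l ℝ) : Matrix k l ℂ :=
  M.map (algebraMap ℝ ℂ)

/-- A real rational function is stable if every complex root of its reduced denominator
has real part `< 0`. -/
def StableF (f : RatFunc ℝ) : Prop :=
  ∀ z : ℂ, ((f.denom).map (algebraMap ℝ ℂ)).IsRoot z → z.re < 0

/-- A real square matrix is Hurwitz if all roots of its characteristic polynomial
have real part `< 0`. -/
def IsHurwitz {k : Type} [Fintype k] [DecidableEq k] (M : Matrix k k ℝ) : Prop :=
  ∀ z : ℂ, ((M.charpoly).map (algebraMap ℝ ℂ)).IsRoot z → z.re < 0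

/-- `A_K := K A11 - K A12 K + A21 - A22 K`. -/
noncomputable def AKmat {p r : ℕ} (A11 : Matrix (Fin p) (Fin p) ℝ)
    (A12 : Matrix (Fin p) (Fin r) ℝ) (A21 : Matrix (Fin r) (Fin p) ℝ)
    (A22 : Matrix (Fin r) (Fin r) ℝ) (K : Matrix (Fin r) (Fin p) ℝ) :
    Matrix (Fin r) (Fin p) ℝ :=
  K * A11 - K * A12 * K + A21 - A22 * K

/-- The `W` member of the SRTR pair obtained from `K`. -/
noncomputable def srtrW {p r : ℕ} (A11 : Matrix (Fin p) (Fin p) ℝ)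
    (A12 : Matrix (Fin p) (Fin r) ℝ) (A21 : Matrix (Fin r) (Fin p) ℝ)
    (A22 : Matrix (Fin r) (Fin r) ℝ) (K : Matrix (Fin r) (Fin p) ℝ) :
    Matrix (Fin p) (Fin p) FF :=
  mapF (A11 - A12 * K) +
    mapF A12 * (lamI (A22 + K * A12))⁻¹ * mapF (AKmat A11 A12 A21 A22 K)

/-- The `V` member of the SRTR pair obtained from `K`. -/
noncomputable def srtrV {p r m : ℕ} (A12 : Matrix (Fin p) (Fin r) ℝ)
    (A22 : Matrix (Fin r) (Fin r) ℝ) (B1 : Matrix (Fin p) (Fin m) ℝ)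
    (B2 : Matrix (Fin r) (Fin m) ℝ) (K : Matrix (Fin r) (Fin p) ℝ) :
    Matrix (Fin p) (Fin m) FF :=
  mapF B1 + mapF A12 * (lamI (A22 + K * A12))⁻¹ * mapF (K * B1 + B2)

/-- The plant transfer function `G = [I_p 0] (λ I_n - A)⁻¹ B`. -/
noncomputable def plantG {p r m : ℕ} (A11 : Matrix (Fin p) (Fin p) ℝ)
    (A12 : Matrix (Fin p) (Fin r) ℝ) (A21 : Matrix (Fin r) (Fin p) ℝ)
    (A22 : Matrix (Fin r) (Fin r) ℝ) (B1 : Matrix (Fin p) (Fin m) ℝ)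
    (B2 : Matrix (Fin r) (Fin m) ℝ) : Matrix (Fin p) (Fin m) FF :=
  fromCols (1 : Matrix (Fin p) (Fin p) FF) (0 : Matrix (Fin p) (Fin r) FF) *
    (lamI (fromBlocks A11 A12 A21 A22))⁻¹ * mapF (fromRows B1 B2)

/-- `(A12, A22)` is observable: `[A22 - μ I ; A12]` has full column rank for all `μ : ℂ`. -/
def ObsPair {p r : ℕ} (A12 : Matrix (Fin p) (Fin r) ℝ)
    (A22 : Matrix (Fin r) (Fin r) ℝ) : Prop :=
  ∀ μ : ℂ, (fromRows (mapC A22 - μ • (1 : Matrix (Fin r) (Fin r) ℂ)) (mapC A12)).rank = r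

/-- `(A, B)` is controllable: `[A - μ I, B]` has full row rank for all `μ : ℂ`. -/
def CtrbPair {p r m : ℕ} (A : Matrix (Fin p ⊕ Fin r) (Fin p ⊕ Fin r) ℝ)
    (B : Matrix (Fin p ⊕ Fin r) (Fin m) ℝ) : Prop :=
  ∀ μ : ℂ, (fromCols (mapC A - μ • (1 : Matrix (Fin p ⊕ Fin r) (Fin p ⊕ Fin r) ℂ))
    (mapC B)).rank = p + r

/-! The shear `(x₁, x₂) ↦ (x₁, x₂ + K x₁)` of the state conjugates `λI - A` into the block pencil
`λI - [[A11 - A12 K, A12], [A_K, A22 + K A12]]`, whose Schur complement with respect to its lower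
right block is `λI - W`. Eliminating the second block row from `(λI - A) X = B` in the new
coordinates gives `(λI - W) G = V`. A Schur complement `λI - P - Q (λI - S)⁻¹ R` of a real pencil
is invertible, because `det (λI - S)` times its determinant is the nonzero characteristic
polynomial of `[[P, Q], [R, S]]`; each diagonal entry `λ - W i i` is itself the `1 × 1` Schur
complement of a smaller real pencil, hence nonzero. Finally `I - Φ = (λI - D)⁻¹ (λI - W)`. -/

lemma schur_mul_eq_of_fromBlocks_mul_fromRows {R k k' l o : Type} [CommRing R] [Fintype k']
    [Fintype l] [DecidableEq l] {A : Matrix k k' R} {B : Matrix k l R} {C : Matrix l k' R}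
    {D : Matrix l l R} {Y₁ : Matrix k' o R} {Y₂ : Matrix l o R} {U₁ : Matrix k o R}
    {U₂ : Matrix l o R} (hD : IsUnit D.det)
    (h : fromBlocks A B C D * fromRows Y₁ Y₂ = fromRows U₁ U₂) :
    (A - B * D⁻¹ * C) * Y₁ = U₁ - B * D⁻¹ * U₂ := by
  rw [fromBlocks_mul_fromRows, fromRows_ext_iff] at h
  obtain ⟨h₁, h₂⟩ := h
  have hY₂ : Y₂ = D⁻¹ * (U₂ - C * Y₁) := by
    rw [← h₂, add_sub_cancel_left, ← Matrix.mul_assoc, nonsing_inv_mul _ hD, Matrix.one_mul]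
  rw [← h₁, hY₂]
  simp only [Matrix.sub_mul, Matrix.mul_sub, Matrix.mul_assoc]
  abel

lemma mapF_mul {k l o : Type} [Fintype l] (M : Matrix k l ℝ) (N : Matrix l o ℝ) :
    mapF (M * N) = mapF M * mapF N :=
  Matrix.map_mul

lemma mapF_fromBlocks {k l o q : Type} (P : Matrix k o ℝ) (Q : Matrix k q ℝ)
    (R : Matrix l o ℝ) (S : Matrix l q ℝ) :
    mapF (fromBlocks P Q R S) = fromBlocks (mapF P) (mapF Q) (mapF R) (mapF S) :=
  fromBlocks_map _ _ _ _ _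

lemma mapF_fromRows {k l o : Type} (P : Matrix k o ℝ) (Q : Matrix l o ℝ) :
    mapF (fromRows P Q) = fromRows (mapF P) (mapF Q) := by
  ext (i | i) j <;> rfl

section Pencil

variable {k l : Type} [Fintype k] [DecidableEq k] [Fintype l] [DecidableEq l]

lemma lamI_eq_map_charmatrix (M : Matrix k k ℝ) :
    lamI M = (charmatrix M).map (algebraMap ℝ[X] FF) := by
  ext i j
  by_cases h : i = j
  · subst h
    simp [lamI, mapF, lam, RatFunc.algebraMap_X, RatFunc.algebraMap_C]
  · simp [lamI, mapF, h, RatFunc.algebraMap_C]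

lemma det_lamI (M : Matrix k k ℝ) : (lamI M).det = algebraMap ℝ[X] FF M.charpoly := by
  rw [lamI_eq_map_charmatrix, ← RingHom.mapMatrix_apply, ← RingHom.map_det, charpoly]

lemma isUnit_det_lamI (M : Matrix k k ℝ) : IsUnit (lamI M).det := by
  rw [det_lamI, isUnit_iff_ne_zero]
  exact RatFunc.algebraMap_ne_zero M.charpoly_monic.ne_zero

lemma lamI_fromBlocks (P : Matrix k k ℝ) (Q : Matrix k l ℝ) (R : Matrix l k ℝ)
    (S : Matrix l l ℝ) :
    lamI (fromBlocks P Q R S) = fromBlocks (lamI P) (-mapF Q) (-mapF R) (lamI S) := by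
  rw [lamI, mapF_fromBlocks, ← fromBlocks_one, fromBlocks_smul]
  ext (i | i) (j | j) <;> simp [lamI]

lemma mapF_mul_lamI_of_mul_eq {T M N : Matrix k k ℝ} (h : T * M = N * T) :
    mapF T * lamI M = lamI N * mapF T := by
  simp only [lamI, Matrix.mul_sub, Matrix.sub_mul, Matrix.mul_smul, Matrix.smul_mul,
    Matrix.mul_one, Matrix.one_mul, ← mapF_mul, h]

/-- The Schur complement of the block `λ I - S` in the pencil `λ I - [[P, Q], [R, S]]`. -/
def schurPencil (P : Matrix k k ℝ) (Q : Matrix k l ℝ) (R : Matrix l k ℝ) (S : Matrix l l ℝ) :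
    Matrix k k FF :=
  lamI P - mapF Q * (lamI S)⁻¹ * mapF R

lemma isUnit_det_schurPencil (P : Matrix k k ℝ) (Q : Matrix k l ℝ) (R : Matrix l k ℝ)
    (S : Matrix l l ℝ) : IsUnit (schurPencil P Q R S).det := by
  have := invertibleOfIsUnitDet _ (isUnit_det_lamI S)
  have h := det_fromBlocks₂₂ (lamI P) (-mapF Q) (-mapF R) (lamI S)
  rw [← lamI_fromBlocks, invOf_eq_nonsing_inv, Matrix.neg_mul, Matrix.neg_mul, Matrix.mul_neg,
    neg_neg, ← schurPencil] at h
  exact isUnit_of_mul_isUnit_right (h ▸ isUnit_det_lamI (fromBlocks P Q R S))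

lemma lamI_submatrix {j : Type} [Fintype j] [DecidableEq j] (M : Matrix k k ℝ) {e : j → k}
    (he : Function.Injective e) : (lamI M).submatrix e e = lamI (M.submatrix e e) := by
  change lam • (1 : Matrix k k FF).submatrix e e - (mapF M).submatrix e e = _
  rw [submatrix_one _ he]
  rfl

lemma schurPencil_submatrix {j : Type} [Fintype j] [DecidableEq j] (P : Matrix k k ℝ)
    (Q : Matrix k l ℝ) (R : Matrix l k ℝ) (S : Matrix l l ℝ) {e : j → k}
    (he : Function.Injective e) :
    (schurPencil P Q R S).submatrix e e =
      schurPencil (P.submatrix e e) (Q.submatrix e id) (R.submatrix id e) S := by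
  change (lamI P).submatrix e e - (mapF Q * (lamI S)⁻¹ * mapF R).submatrix e e = _
  rw [lamI_submatrix P he, submatrix_mul _ _ _ id _ Function.bijective_id,
    submatrix_mul _ _ _ id _ Function.bijective_id, submatrix_id_id]
  rfl

lemma schurPencil_apply_self_ne_zero (P : Matrix k k ℝ) (Q : Matrix k l ℝ) (R : Matrix l k ℝ)
    (S : Matrix l l ℝ) (i : k) : schurPencil P Q R S i i ≠ 0 := by
  let e : Unit → k := fun _ => i
  have hdet := isUnit_det_schurPencil (P.submatrix e e) (Q.submatrix e id) (R.submatrix id e) S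
  rw [← schurPencil_submatrix P Q R S (Function.injective_of_subsingleton e), det_unique] at hdet
  exact hdet.ne_zero

end Pencil

lemma fromBlocks_shear_mul {p r : ℕ} (A11 : Matrix (Fin p) (Fin p) ℝ)
    (A12 : Matrix (Fin p) (Fin r) ℝ) (A21 : Matrix (Fin r) (Fin p) ℝ)
    (A22 : Matrix (Fin r) (Fin r) ℝ) (K : Matrix (Fin r) (Fin p) ℝ) :
    fromBlocks 1 0 K 1 * fromBlocks A11 A12 A21 A22 =
      fromBlocks (A11 - A12 * K) A12 (AKmat A11 A12 A21 A22 K) (A22 + K * A12) *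
        fromBlocks 1 0 K 1 := by
  simp only [fromBlocks_multiply, AKmat, Matrix.one_mul, Matrix.mul_one, Matrix.zero_mul,
    Matrix.mul_zero, add_zero, zero_add, Matrix.add_mul, Matrix.mul_assoc]
  congr 1 <;> abel

lemma lam_smul_one_sub_srtrW {p r : ℕ} (A11 : Matrix (Fin p) (Fin p) ℝ)
    (A12 : Matrix (Fin p) (Fin r) ℝ) (A21 : Matrix (Fin r) (Fin p) ℝ)
    (A22 : Matrix (Fin r) (Fin r) ℝ) (K : Matrix (Fin r) (Fin p) ℝ) :
    lam • 1 - srtrW A11 A12 A21 A22 K =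
      schurPencil (A11 - A12 * K) A12 (AKmat A11 A12 A21 A22 K) (A22 + K * A12) := by
  simp only [srtrW, schurPencil, lamI]
  abel

lemma lam_smul_one_sub_srtrW_mul_plantG {p r m : ℕ} (A11 : Matrix (Fin p) (Fin p) ℝ)
    (A12 : Matrix (Fin p) (Fin r) ℝ) (A21 : Matrix (Fin r) (Fin p) ℝ)
    (A22 : Matrix (Fin r) (Fin r) ℝ) (B1 : Matrix (Fin p) (Fin m) ℝ)
    (B2 : Matrix (Fin r) (Fin m) ℝ) (K : Matrix (Fin r) (Fin p) ℝ) :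
    (lam • 1 - srtrW A11 A12 A21 A22 K) * plantG A11 A12 A21 A22 B1 B2 =
      srtrV A12 A22 B1 B2 K := by
  have hY : lamI (fromBlocks A11 A12 A21 A22) *
      ((lamI (fromBlocks A11 A12 A21 A22))⁻¹ * mapF (fromRows B1 B2)) = mapF (fromRows B1 B2) :=
    mul_nonsing_inv_cancel_left _ _ (isUnit_det_lamI _)
  rw [plantG, Matrix.mul_assoc]
  generalize (lamI (fromBlocks A11 A12 A21 A22))⁻¹ * mapF (fromRows B1 B2) = Y at hY ⊢
  obtain ⟨Y₁, Y₂, rfl⟩ : ∃ Y₁ Y₂, Y = fromRows Y₁ Y₂ := ⟨_, _, (fromRows_toRows Y).symm⟩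
  rw [fromCols_mul_fromRows, Matrix.one_mul, Matrix.zero_mul, add_zero]
  -- in the coordinates `(x₁, x₂ + K x₁)` the state equation takes the block form of `srtrW`
  have hshear : fromBlocks (lamI (A11 - A12 * K)) (-mapF A12) (-mapF (AKmat A11 A12 A21 A22 K))
      (lamI (A22 + K * A12)) * fromRows Y₁ (mapF K * Y₁ + Y₂) =
        fromRows (mapF B1) (mapF (K * B1 + B2)) := by
    have hY' : fromRows Y₁ (mapF K * Y₁ + Y₂) =
        mapF (fromBlocks 1 0 K 1 : Matrix (Fin p ⊕ Fin r) (Fin p ⊕ Fin r) ℝ) * fromRows Y₁ Y₂ := by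
      rw [mapF_fromBlocks, fromBlocks_mul_fromRows]
      simp [mapF]
    have hB : fromRows (mapF B1) (mapF (K * B1 + B2)) =
        mapF ((fromBlocks 1 0 K 1 : Matrix (Fin p ⊕ Fin r) (Fin p ⊕ Fin r) ℝ) * fromRows B1 B2) := by
      rw [fromBlocks_mul_fromRows, mapF_fromRows]
      simp
    rw [← lamI_fromBlocks, hY', hB, ← Matrix.mul_assoc,
      ← mapF_mul_lamI_of_mul_eq (fromBlocks_shear_mul A11 A12 A21 A22 K), Matrix.mul_assoc, hY,
      mapF_mul]
  have := schur_mul_eq_of_fromBlocks_mul_fromRows (isUnit_det_lamI _) hshear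
  rw [lam_smul_one_sub_srtrW, schurPencil, srtrV]
  simpa only [Matrix.neg_mul, Matrix.mul_neg, neg_neg, sub_neg_eq_add] using this

theorem stmt_3_general (p r m : ℕ)
    (A11 : Matrix (Fin p) (Fin p) ℝ) (A12 : Matrix (Fin p) (Fin r) ℝ)
    (A21 : Matrix (Fin r) (Fin p) ℝ) (A22 : Matrix (Fin r) (Fin r) ℝ)
    (B1 : Matrix (Fin p) (Fin m) ℝ) (B2 : Matrix (Fin r) (Fin m) ℝ) :
    ∀ K : Matrix (Fin r) (Fin p) ℝ,
      let W := srtrW A11 A12 A21 A22 K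
      let V := srtrV A12 A22 B1 B2 K
      let D : Matrix (Fin p) (Fin p) FF := Matrix.diagonal (fun i => W i i)
      let Φ : Matrix (Fin p) (Fin p) FF :=
        (lam • (1 : Matrix (Fin p) (Fin p) FF) - D)⁻¹ * (W - D)
      let Γ : Matrix (Fin p) (Fin m) FF :=
        (lam • (1 : Matrix (Fin p) (Fin p) FF) - D)⁻¹ * V
      IsUnit (lam • (1 : Matrix (Fin p) (Fin p) FF) - D) ∧
      (∀ i : Fin p, Φ i i = 0) ∧
      IsUnit ((1 : Matrix (Fin p) (Fin p) FF) - Φ) ∧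
      ((1 : Matrix (Fin p) (Fin p) FF) - Φ) * plantG A11 A12 A21 A22 B1 B2 = Γ := by
  intro K W V D Φ Γ
  have hD : lam • 1 - D = diagonal fun i => (lam • 1 - W) i i := by
    ext i j
    by_cases h : i = j <;> simp [D, h]
  have hW : lam • 1 - W =
      schurPencil (A11 - A12 * K) A12 (AKmat A11 A12 A21 A22 K) (A22 + K * A12) :=
    lam_smul_one_sub_srtrW A11 A12 A21 A22 K
  have hD_unit : IsUnit (lam • 1 - D) := by
    rw [hD, isUnit_diagonal, Pi.isUnit_iff, hW]
    exact fun i => (schurPencil_apply_self_ne_zero _ _ _ _ i).isUnit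
  have h_one_sub_Φ : 1 - Φ = (lam • 1 - D)⁻¹ * (lam • 1 - W) := by
    rw [← sub_sub_sub_cancel_right (lam • 1) W D, Matrix.mul_sub,
      nonsing_inv_mul _ ((isUnit_iff_isUnit_det _).mp hD_unit)]
  refine ⟨hD_unit, fun i => ?_, ?_, ?_⟩
  · simp [Φ, hD, inv_diagonal, D]
  · rw [h_one_sub_Φ, hW]
    exact (isUnit_nonsing_inv_iff.mpr hD_unit).mul
      ((isUnit_iff_isUnit_det _).mpr (isUnit_det_schurPencil _ _ _ _))
  · rw [h_one_sub_Φ, Matrix.mul_assoc, lam_smul_one_sub_srtrW_mul_plantG]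

/-- for every `K`, with `D` the diagonal of `W`, the pencil `λ I_p - D` is
invertible, `Φ := (λ I_p - D)⁻¹ (W - D)` has zero diagonal, `I_p - Φ` is invertible, and
`(I_p - Φ) G = Γ` where `Γ := (λ I_p - D)⁻¹ V`; i.e. `(Φ, Γ)` is an NRF pair of `G`. -/
theorem stmt_3 (p r m : ℕ) (hp : 0 < p) (hr : 0 < r) (hm : 0 < m)
    (A11 : Matrix (Fin p) (Fin p) ℝ) (A12 : Matrix (Fin p) (Fin r) ℝ)
    (A21 : Matrix (Fin r) (Fin p) ℝ) (A22 : Matrix (Fin r) (Fin r) ℝ)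
    (B1 : Matrix (Fin p) (Fin m) ℝ) (B2 : Matrix (Fin r) (Fin m) ℝ) :
    ∀ K : Matrix (Fin r) (Fin p) ℝ,
      let W := srtrW A11 A12 A21 A22 K
      let V := srtrV A12 A22 B1 B2 K
      let D : Matrix (Fin p) (Fin p) FF := Matrix.diagonal (fun i => W i i)
      let Φ : Matrix (Fin p) (Fin p) FF :=
        (lam • (1 : Matrix (Fin p) (Fin p) FF) - D)⁻¹ * (W - D)
      let Γ : Matrix (Fin p) (Fin m) FF :=
        (lam • (1 : Matrix (Fin p) (Fin p) FF) - D)⁻¹ * V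
      IsUnit (lam • (1 : Matrix (Fin p) (Fin p) FF) - D) ∧
      (∀ i : Fin p, Φ i i = 0) ∧
      IsUnit ((1 : Matrix (Fin p) (Fin p) FF) - Φ) ∧
      ((1 : Matrix (Fin p) (Fin p) FF) - Φ) * plantG A11 A12 A21 A22 B1 B2 = Γ :=
  stmt_3_general p r m A11 A12 A21 A22 B1 B2
end
end

section
/- Assume (A, B) is controllable. Then for every K ∈ ℝ^{(n−p)×p} and every μ ∈ ℂ, the complex (n+p)×(n+p+m) system matrix S(μ) := [[(A22 + K·A12) − μI_{n−p}, 0, K·A12·K + A22·K − K·A11 − A21, K·B1 + B2],[0, I_p, −μI_p, 0],[A12, I_p, −A11 + A12·K, B1]] (real blocks complexified) has full row rank n+p. -/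
open Matrix Polynomial

set_option synthInstance.maxHeartbeats 1000000
set_option maxHeartbeats 1000000

noncomputable section

/-!
`S(μ)` arises from the Hautus matrix `[A - μI, B]` by invertible row and column operations, so it
has full row rank whenever `[A - μI, B]` does. Concretely, to reach `(y₁, y₂, y₃)` with `S(μ)`,
solve `(A - μI) (a, b) + B z = (y₃ - y₂, y₁ - K (y₃ - y₂))` and take
`x = (b + K a, y₂ - μ a, -a, z)`.
-/

namespace Matrix

theorem rank_eq_card_iff_surjective_mulVec {K : Type*} [Field K] {m n : Type*} [Fintype m]
    [Fintype n] (M : Matrix m n K) :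
    M.rank = Fintype.card m ↔ Function.Surjective M.mulVec := by
  rw [rank, ← Module.finrank_fintype_fun_eq_card (R := K), ← coe_mulVecLin,
    ← LinearMap.range_eq_top, Submodule.eq_top_iff_finrank_eq]

variable {R : Type*} [CommRing R] {l m n : Type*} [DecidableEq m] [DecidableEq n]

theorem fromBlocks_sub_smul_one (A : Matrix m m R) (B : Matrix m n R) (C : Matrix n m R)
    (D : Matrix n n R) (s : R) :
    fromBlocks A B C D - s • 1 = fromBlocks (A - s • 1) B C (D - s • 1) := by
  rw [← fromBlocks_one, fromBlocks_smul, sub_eq_add_neg, fromBlocks_neg, fromBlocks_add]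
  simp only [smul_zero, neg_zero, add_zero, ← sub_eq_add_neg]

variable [Fintype l] [Fintype m] [Fintype n]

theorem systemMatrix_mulVec_surjective
    (A11 : Matrix m m R) (A12 : Matrix m n R) (A21 : Matrix n m R) (A22 : Matrix n n R)
    (B1 : Matrix m l R) (B2 : Matrix n l R) (K : Matrix n m R) (s : R)
    (hAB : Function.Surjective
      (fromCols (fromBlocks A11 A12 A21 A22 - s • 1) (fromRows B1 B2)).mulVec) :
    Function.Surjective
      (fromBlocks (fromBlocks (A22 + K * A12 - s • 1) 0 0 (1 : Matrix m m R))
        (fromBlocks (K * A12 * K + A22 * K - K * A11 - A21) (K * B1 + B2) (-(s • 1)) 0)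
        (fromCols A12 (1 : Matrix m m R)) (fromCols (-A11 + A12 * K) B1)).mulVec := by
  intro y
  obtain ⟨y₁, y₂, y₃, rfl⟩ : ∃ y₁ y₂ y₃, y = Sum.elim (Sum.elim y₁ y₂) y₃ :=
    ⟨_, _, _, by ext ((i | i) | i) <;> rfl⟩
  obtain ⟨x, hx⟩ := hAB (Sum.elim (y₃ - y₂) (y₁ - K *ᵥ (y₃ - y₂)))
  obtain ⟨a, b, z, rfl⟩ : ∃ a b z, x = Sum.elim (Sum.elim a b) z :=
    ⟨_, _, _, by ext ((i | i) | i) <;> rfl⟩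
  simp only [fromBlocks_sub_smul_one, fromCols_mulVec_sumElim, fromBlocks_mulVec,
    fromRows_mulVec, Sum.elim_comp_inl, Sum.elim_comp_inr, ← Sum.elim_add_add,
    Sum.elim_eq_iff, eq_sub_iff_add_eq] at hx
  obtain ⟨rfl, rfl⟩ := hx
  refine ⟨Sum.elim (Sum.elim (b + K *ᵥ a) (y₂ - s • a)) (Sum.elim (-a) z), ?_⟩
  simp only [fromBlocks_mulVec, fromCols_mulVec_sumElim, Sum.elim_comp_inl, Sum.elim_comp_inr,
    ← Sum.elim_add_add, Sum.elim_eq_iff]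
  refine ⟨⟨?_, ?_⟩, ?_⟩ <;>
  · simp only [add_mulVec, sub_mulVec, neg_mulVec, smul_mulVec, one_mulVec, zero_mulVec,
      mulVec_add, mulVec_sub, mulVec_neg, mulVec_smul, ← mulVec_mulVec]
    module

end Matrix

section Complexification

variable {k l o : Type}

theorem mapC_add (M N : Matrix k l ℝ) : mapC (M + N) = mapC M + mapC N :=
  Matrix.map_add _ (map_add _) M N

theorem mapC_sub (M N : Matrix k l ℝ) : mapC (M - N) = mapC M - mapC N :=
  Matrix.map_sub _ (map_sub _) M N

theorem mapC_neg (M : Matrix k l ℝ) : mapC (-M) = -mapC M :=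
  Matrix.map_neg _ (map_neg _) M

theorem mapC_mul [Fintype l] (M : Matrix k l ℝ) (N : Matrix l o ℝ) :
    mapC (M * N) = mapC M * mapC N :=
  Matrix.map_mul

end Complexification

theorem stmt_6_general (p r m : ℕ)
    (A11 : Matrix (Fin p) (Fin p) ℝ) (A12 : Matrix (Fin p) (Fin r) ℝ)
    (A21 : Matrix (Fin r) (Fin p) ℝ) (A22 : Matrix (Fin r) (Fin r) ℝ)
    (B1 : Matrix (Fin p) (Fin m) ℝ) (B2 : Matrix (Fin r) (Fin m) ℝ)
    (hctrb : CtrbPair (fromBlocks A11 A12 A21 A22) (fromRows B1 B2)) :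
    ∀ (K : Matrix (Fin r) (Fin p) ℝ) (μ : ℂ),
      (fromBlocks
        (fromBlocks (mapC (A22 + K * A12) - μ • (1 : Matrix (Fin r) (Fin r) ℂ))
          (0 : Matrix (Fin r) (Fin p) ℂ) (0 : Matrix (Fin p) (Fin r) ℂ)
          (1 : Matrix (Fin p) (Fin p) ℂ))
        (fromBlocks (mapC (K * A12 * K + A22 * K - K * A11 - A21)) (mapC (K * B1 + B2))
          (-(μ • (1 : Matrix (Fin p) (Fin p) ℂ))) (0 : Matrix (Fin p) (Fin m) ℂ))
        (fromCols (mapC A12) (1 : Matrix (Fin p) (Fin p) ℂ))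
        (fromCols (mapC (-A11 + A12 * K)) (mapC B1))).rank = r + p + p := by
  intro K μ
  have hcard : Fintype.card ((Fin r ⊕ Fin p) ⊕ Fin p) = r + p + p := by simp
  rw [← hcard, rank_eq_card_iff_surjective_mulVec]
  simp only [mapC_add, mapC_sub, mapC_neg, mapC_mul]
  apply systemMatrix_mulVec_surjective
  rw [← rank_eq_card_iff_surjective_mulVec]
  simpa only [mapC, fromBlocks_map, fromRows_map, Fintype.card_sum, Fintype.card_fin,
    add_comm p r] using hctrb μ

/-- under controllability, for every `K` and every `μ : ℂ` the complexified
system matrix `S(μ)` of the Rosenbrock-type realization of `[λ I_p - W, V]` has full row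
rank `n + p = r + p + p`. -/
theorem stmt_6 (p r m : ℕ) (hp : 0 < p) (hr : 0 < r) (hm : 0 < m)
    (A11 : Matrix (Fin p) (Fin p) ℝ) (A12 : Matrix (Fin p) (Fin r) ℝ)
    (A21 : Matrix (Fin r) (Fin p) ℝ) (A22 : Matrix (Fin r) (Fin r) ℝ)
    (B1 : Matrix (Fin p) (Fin m) ℝ) (B2 : Matrix (Fin r) (Fin m) ℝ)
    (hctrb : CtrbPair (fromBlocks A11 A12 A21 A22) (fromRows B1 B2)) :
    ∀ (K : Matrix (Fin r) (Fin p) ℝ) (μ : ℂ),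
      (fromBlocks
        (fromBlocks (mapC (A22 + K * A12) - μ • (1 : Matrix (Fin r) (Fin r) ℂ))
          (0 : Matrix (Fin r) (Fin p) ℂ) (0 : Matrix (Fin p) (Fin r) ℂ)
          (1 : Matrix (Fin p) (Fin p) ℂ))
        (fromBlocks (mapC (K * A12 * K + A22 * K - K * A11 - A21)) (mapC (K * B1 + B2))
          (-(μ • (1 : Matrix (Fin p) (Fin p) ℂ))) (0 : Matrix (Fin p) (Fin m) ℂ))
        (fromCols (mapC A12) (1 : Matrix (Fin p) (Fin p) ℂ))
        (fromCols (mapC (-A11 + A12 * K)) (mapC B1))).rank = r + p + p :=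
  stmt_6_general p r m A11 A12 A21 A22 B1 B2 hctrb
end
end
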